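/- For all 0 ≤ s < t < T and all x, d ∈ ℝ, the infimum, over all continuously differentiable paths γ : [s,t] → ℝ with γ(s) = x and γ(t) = d, of (1/2)·∫_s^t (γ'(v) − b(γ(v),v))² dv equals a1·sinh(a1(T−s))·(d − x⁰_{x,s}(t))² / (2·sinh(a1(T−t))·sinh(a1(t−s))), and this infimum is attained by the path γ_{x,s;d,t}. -/

import Mathlib

set_option maxHeartbeats 3000000

/-- The drift of the Ornstein–Uhlenbeck bridge. -/
noncomputable def drift (a0 a1 T xT x t : ℝ) : ℝ :=
  a1 * ((xT + a0 / a1) - (x + a0 / a1) * Real.cosh (a1 * (T - t))) / Real.sinh (a1 * (T - t))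

/-- The deterministic trajectory `x⁰_{x,s}`. -/
noncomputable def traj (a0 a1 T xT x s t : ℝ) : ℝ :=
  (x + a0 / a1) * Real.sinh (a1 * (T - t)) / Real.sinh (a1 * (T - s)) +
    (xT + a0 / a1) * Real.sinh (a1 * (t - s)) / Real.sinh (a1 * (T - s)) - a0 / a1

/-- The two-point cost `u(x,s;d,t)`. -/
noncomputable def cost (a0 a1 T xT x s d t : ℝ) : ℝ :=
  a1 * Real.sinh (a1 * (T - s)) * (d - traj a0 a1 T xT x s t) ^ 2 /
    (2 * Real.sinh (a1 * (T - t)) * Real.sinh (a1 * (t - s)))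

/-- The extremal path `γ_{x,s;d,t}`. -/
noncomputable def gammaPath (a0 a1 x s d t v : ℝ) : ℝ :=
  (x + a0 / a1) * Real.sinh (a1 * (t - v)) / Real.sinh (a1 * (t - s)) +
    (d + a0 / a1) * Real.sinh (a1 * (v - s)) / Real.sinh (a1 * (t - s)) - a0 / a1

lemma aux_sinh_ne {a1 u : ℝ} (ha1 : a1 ≠ 0) (hu : u ≠ 0) : Real.sinh (a1 * u) ≠ 0 := by
  simp [Real.sinh_eq_zero, mul_eq_zero, ha1, hu]

lemma aux_hasDerivAt_sinh (a b v : ℝ) :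
    HasDerivAt (fun w => Real.sinh (a * (b - w))) (-(a * Real.cosh (a * (b - v)))) v := by
  have h1 : HasDerivAt (fun w : ℝ => a * (b - w)) (a * (-1)) v :=
    ((hasDerivAt_id v).const_sub b).const_mul a
  have := (Real.hasDerivAt_sinh (a * (b - v))).comp v h1
  refine this.congr_deriv ?_
  ring

lemma aux_hasDerivAt_cosh (a b v : ℝ) :
    HasDerivAt (fun w => Real.cosh (a * (b - w))) (-(a * Real.sinh (a * (b - v)))) v := by
  have h1 : HasDerivAt (fun w : ℝ => a * (b - w)) (a * (-1)) v :=
    ((hasDerivAt_id v).const_sub b).const_mul a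
  have := (Real.hasDerivAt_cosh (a * (b - v))).comp v h1
  refine this.congr_deriv ?_
  ring

lemma aux_hasDerivAt_sinh' (a b v : ℝ) :
    HasDerivAt (fun w => Real.sinh (a * (w - b))) (a * Real.cosh (a * (v - b))) v := by
  have h1 : HasDerivAt (fun w : ℝ => a * (w - b)) (a * 1) v :=
    ((hasDerivAt_id v).sub_const b).const_mul a
  have := (Real.hasDerivAt_sinh (a * (v - b))).comp v h1
  refine this.congr_deriv ?_
  ring

lemma gammaPath_hasDerivAt (a0 a1 x s d t v : ℝ) :
    HasDerivAt (gammaPath a0 a1 x s d t)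
      ((-(a1 * (x + a0 / a1) * Real.cosh (a1 * (t - v)))
        + a1 * (d + a0 / a1) * Real.cosh (a1 * (v - s))) / Real.sinh (a1 * (t - s))) v := by
  have h1 := (((aux_hasDerivAt_sinh a1 t v).const_mul (x + a0 / a1)).div_const
    (Real.sinh (a1 * (t - s))))
  have h2 := (((aux_hasDerivAt_sinh' a1 s v).const_mul (d + a0 / a1)).div_const
    (Real.sinh (a1 * (t - s))))
  have := (h1.add h2).sub_const (a0 / a1)
  refine this.congr_deriv ?_
  ring

/-- The central algebraic identity: the extremal path's "error" term times `sinh (a1(T-v))`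
is the constant `k`. -/
lemma key_identity (a0 a1 T xT x s d t v : ℝ) (ha1 : a1 ≠ 0)
    (hS : Real.sinh (a1 * (t - s)) ≠ 0) (hAv : Real.sinh (a1 * (T - v)) ≠ 0)
    (hAs : Real.sinh (a1 * (T - s)) ≠ 0) :
    Real.sinh (a1 * (T - v)) *
      ((-(a1 * (x + a0 / a1) * Real.cosh (a1 * (t - v)))
          + a1 * (d + a0 / a1) * Real.cosh (a1 * (v - s))) / Real.sinh (a1 * (t - s))
        - drift a0 a1 T xT (gammaPath a0 a1 x s d t v) v)
    = a1 * Real.sinh (a1 * (T - s)) * (d - traj a0 a1 T xT x s t)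
        / Real.sinh (a1 * (t - s)) := by
  rw [drift, traj, gammaPath]
  simp only [mul_sub, neg_sub, Real.sinh_eq, Real.cosh_eq, Real.exp_sub] at hS hAv hAs ⊢
  have e1 := Real.exp_pos (a1 * T)
  have e2 := Real.exp_pos (a1 * t)
  have e3 := Real.exp_pos (a1 * s)
  have e4 := Real.exp_pos (a1 * v)
  have hS' : Real.exp (a1 * t) ^ 2 - Real.exp (a1 * s) ^ 2 ≠ 0 := by
    intro h; apply hS; field_simp; linear_combination h
  have hAv' : Real.exp (a1 * T) ^ 2 - Real.exp (a1 * v) ^ 2 ≠ 0 := by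
    intro h; apply hAv; field_simp; linear_combination h
  have hAs' : Real.exp (a1 * T) ^ 2 - Real.exp (a1 * s) ^ 2 ≠ 0 := by
    intro h; apply hAs; field_simp; linear_combination h
  field_simp
  ring

lemma drift_sub (a0 a1 T xT X Z v : ℝ) (hAv : Real.sinh (a1 * (T - v)) ≠ 0) :
    drift a0 a1 T xT X v - drift a0 a1 T xT Z v
      = -(a1 * Real.cosh (a1 * (T - v)) * (X - Z)) / Real.sinh (a1 * (T - v)) := by
  rw [drift, drift]
  field_simp
  ring

lemma coth_hasDerivAt (a1 T v : ℝ) (hAv : Real.sinh (a1 * (T - v)) ≠ 0) :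
    HasDerivAt (fun w => Real.cosh (a1 * (T - w)) / Real.sinh (a1 * (T - w)))
      (a1 / Real.sinh (a1 * (T - v)) ^ 2) v := by
  have h := (aux_hasDerivAt_cosh a1 T v).div (aux_hasDerivAt_sinh a1 T v) hAv
  refine h.congr_deriv ?_
  have hid := Real.cosh_sq_sub_sinh_sq (a1 * (T - v))
  field_simp
  linear_combination a1 * hid

theorem stmt_6 (a0 a1 T xT : ℝ) (ha1 : a1 ≠ 0) (hT : 0 < T)
    (s t x d : ℝ) (hs : 0 ≤ s) (hst : s < t) (htT : t < T) :
    IsLeast {r : ℝ | ∃ γ : ℝ → ℝ, ContDiffOn ℝ 1 γ (Set.Icc s t) ∧ γ s = x ∧ γ t = d ∧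
        r = (1 / 2) * ∫ v in s..t,
          (derivWithin γ (Set.Icc s t) v - drift a0 a1 T xT (γ v) v) ^ 2}
      (cost a0 a1 T xT x s d t) ∧
    (1 / 2) * (∫ v in s..t,
        (derivWithin (gammaPath a0 a1 x s d t) (Set.Icc s t) v -
          drift a0 a1 T xT (gammaPath a0 a1 x s d t v) v) ^ 2) =
      cost a0 a1 T xT x s d t := by
  have hstle : s ≤ t := hst.le
  have huIcc : Set.uIcc s t = Set.Icc s t := Set.uIcc_of_le hstle
  have hS : Real.sinh (a1 * (t - s)) ≠ 0 := aux_sinh_ne ha1 (by linarith)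
  have hAs : Real.sinh (a1 * (T - s)) ≠ 0 := aux_sinh_ne ha1 (by linarith)
  have hAt : Real.sinh (a1 * (T - t)) ≠ 0 := aux_sinh_ne ha1 (by linarith)
  have hA : ∀ v ∈ Set.Icc s t, Real.sinh (a1 * (T - v)) ≠ 0 := by
    intro v hv
    exact aux_sinh_ne ha1 (by have := hv.2; intro h; linarith [sub_eq_zero.mp h])
  set k : ℝ := a1 * Real.sinh (a1 * (T - s)) * (d - traj a0 a1 T xT x s t)
      / Real.sinh (a1 * (t - s)) with hk
  set gp : ℝ → ℝ := fun v => (-(a1 * (x + a0 / a1) * Real.cosh (a1 * (t - v)))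
      + a1 * (d + a0 / a1) * Real.cosh (a1 * (v - s))) / Real.sinh (a1 * (t - s)) with hgp
  -- Step I : on Icc, the extremal error equals k / sinh(a1(T-v))
  have hkey : ∀ v ∈ Set.Icc s t,
      gp v - drift a0 a1 T xT (gammaPath a0 a1 x s d t v) v = k / Real.sinh (a1 * (T - v)) := by
    intro v hv
    have h := key_identity a0 a1 T xT x s d t v ha1 hS (hA v hv) hAs
    rw [eq_div_iff (hA v hv), hk, mul_comm]
    exact h
  -- Step II : derivWithin of the extremal path
  have hγs : ∀ v ∈ Set.Icc s t,
      derivWithin (gammaPath a0 a1 x s d t) (Set.Icc s t) v = gp v := by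
    intro v hv
    exact ((gammaPath_hasDerivAt a0 a1 x s d t v).hasDerivWithinAt).derivWithin
      (uniqueDiffOn_Icc hst v hv)
  -- continuity of 1/sinh(a1(T-·)) pieces on Icc
  have hAcont : ContinuousOn (fun v => Real.sinh (a1 * (T - v))) (Set.Icc s t) := by
    fun_prop
  -- Step III : ∫ (k / A v)^2 = 2 * cost
  have hIcost : (∫ v in s..t, (k / Real.sinh (a1 * (T - v))) ^ 2)
      = 2 * cost a0 a1 T xT x s d t := by
    have hderiv : ∀ v ∈ Set.uIcc s t,
        HasDerivAt (fun w => (k ^ 2 / a1) * (Real.cosh (a1 * (T - w)) / Real.sinh (a1 * (T - w))))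
          ((k / Real.sinh (a1 * (T - v))) ^ 2) v := by
      intro v hv
      rw [huIcc] at hv
      have h := (coth_hasDerivAt a1 T v (hA v hv)).const_mul (k ^ 2 / a1)
      refine h.congr_deriv ?_
      field_simp
      try ring
    have hint : IntervalIntegrable (fun v => (k / Real.sinh (a1 * (T - v))) ^ 2)
        MeasureTheory.volume s t := by
      apply ContinuousOn.intervalIntegrable
      rw [huIcc]
      exact ((continuousOn_const.div hAcont hA).pow 2)
    rw [intervalIntegral.integral_eq_sub_of_hasDerivAt hderiv hint]
    have hsinh : Real.sinh (a1 * (t - s)) =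
        Real.sinh (a1 * (T - s)) * Real.cosh (a1 * (T - t))
          - Real.cosh (a1 * (T - s)) * Real.sinh (a1 * (T - t)) := by
      have : a1 * (t - s) = a1 * (T - s) - a1 * (T - t) := by ring
      rw [this, Real.sinh_sub]
    have hdiff : Real.cosh (a1 * (T - t)) / Real.sinh (a1 * (T - t))
        - Real.cosh (a1 * (T - s)) / Real.sinh (a1 * (T - s))
        = Real.sinh (a1 * (t - s)) / (Real.sinh (a1 * (T - t)) * Real.sinh (a1 * (T - s))) := by
      rw [div_sub_div _ _ hAt hAs]
      congr 1
      linarith [hsinh]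
    rw [show (k ^ 2 / a1) * (Real.cosh (a1 * (T - t)) / Real.sinh (a1 * (T - t)))
        - (k ^ 2 / a1) * (Real.cosh (a1 * (T - s)) / Real.sinh (a1 * (T - s)))
        = (k ^ 2 / a1) * (Real.cosh (a1 * (T - t)) / Real.sinh (a1 * (T - t))
          - Real.cosh (a1 * (T - s)) / Real.sinh (a1 * (T - s))) from by ring, hdiff, cost, hk]
    field_simp
  -- Membership : the extremal path attains the cost
  have hmem : (1 / 2) * (∫ v in s..t,
      (derivWithin (gammaPath a0 a1 x s d t) (Set.Icc s t) v -
        drift a0 a1 T xT (gammaPath a0 a1 x s d t v) v) ^ 2)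
      = cost a0 a1 T xT x s d t := by
    have hcongr : ∀ v ∈ Set.uIcc s t,
        (derivWithin (gammaPath a0 a1 x s d t) (Set.Icc s t) v -
          drift a0 a1 T xT (gammaPath a0 a1 x s d t v) v) ^ 2
          = (k / Real.sinh (a1 * (T - v))) ^ 2 := by
      intro v hv
      rw [huIcc] at hv
      rw [hγs v hv, hkey v hv]
    rw [intervalIntegral.integral_congr hcongr, hIcost]
    ring
  refine ⟨⟨⟨gammaPath a0 a1 x s d t, ?_, ?_, ?_, hmem.symm⟩, ?_⟩, hmem⟩
  · -- ContDiffOn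
    apply ContDiff.contDiffOn
    unfold gammaPath
    have h1 : ContDiff ℝ 1 (fun v : ℝ => a1 * (t - v)) := by fun_prop
    have h2 : ContDiff ℝ 1 (fun v : ℝ => a1 * (v - s)) := by fun_prop
    exact (((contDiff_const.mul h1.sinh).div_const _).add
      ((contDiff_const.mul h2.sinh).div_const _)).sub contDiff_const
  · -- γ s = x
    simp [gammaPath, mul_comm]
    field_simp
    ring
  · -- γ t = d
    simp [gammaPath, mul_comm]
    field_simp
    ring
  · -- lower bound
    rintro r ⟨γ, hγ, hγx, hγd, rfl⟩
    set E : ℝ → ℝ := fun v =>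
      derivWithin γ (Set.Icc s t) v - drift a0 a1 T xT (γ v) v with hE
    have hEcont : ContinuousOn E (Set.Icc s t) := by
      apply ContinuousOn.sub
      · exact hγ.continuousOn_derivWithin (uniqueDiffOn_Icc hst) le_rfl
      · unfold drift
        apply ContinuousOn.div _ hAcont hA
        have := hγ.continuousOn
        fun_prop (disch := assumption)
    -- the reparametrized difference
    set w : ℝ → ℝ := fun v => (E v - k / Real.sinh (a1 * (T - v))) / Real.sinh (a1 * (T - v))
      with hw
    have hwcont : ContinuousOn w (Set.Icc s t) := by
      apply ContinuousOn.div _ hAcont hA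
      exact hEcont.sub (continuousOn_const.div hAcont hA)
    set η : ℝ → ℝ := fun v =>
      (γ v - gammaPath a0 a1 x s d t v) / Real.sinh (a1 * (T - v)) with hη
    have hηderiv : ∀ v ∈ Set.Icc s t, HasDerivWithinAt η (w v) (Set.Icc s t) v := by
      intro v hv
      have hγd' : HasDerivWithinAt γ (derivWithin γ (Set.Icc s t) v) (Set.Icc s t) v :=
        (hγ.differentiableOn one_ne_zero v hv).hasDerivWithinAt
      have hnum := hγd'.sub (gammaPath_hasDerivAt a0 a1 x s d t v).hasDerivWithinAt
      have hden : HasDerivWithinAt (fun w => Real.sinh (a1 * (T - w)))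
          (-(a1 * Real.cosh (a1 * (T - v)))) (Set.Icc s t) v :=
        (aux_hasDerivAt_sinh a1 T v).hasDerivWithinAt
      have h := hnum.div hden (hA v hv)
      refine h.congr_deriv ?_
      have h1 := hkey v hv
      have h2 := drift_sub a0 a1 T xT (γ v) (gammaPath a0 a1 x s d t v) v (hA v hv)
      rw [hw]
      simp only [hE]
      have hd2 : drift a0 a1 T xT (γ v) v = drift a0 a1 T xT (gammaPath a0 a1 x s d t v) v
          - a1 * Real.cosh (a1 * (T - v)) * (γ v - gammaPath a0 a1 x s d t v)
            / Real.sinh (a1 * (T - v)) := by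
        linear_combination h2
      rw [hd2, ← h1, hgp]
      simp only []
      have hAv := hA v hv
      set Av := Real.sinh (a1 * (T - v)) with hAvdef
      set Cv := Real.cosh (a1 * (T - v)) with hCvdef
      set S0 := Real.sinh (a1 * (t - s)) with hS0def
      set C1 := Real.cosh (a1 * (t - v)) with hC1def
      set C2 := Real.cosh (a1 * (v - s)) with hC2def
      set G := gammaPath a0 a1 x s d t v with hGdef
      set Dg := derivWithin γ (Set.Icc s t) v with hDgdef
      set Dr := drift a0 a1 T xT G v with hDrdef
      field_simp
      simp only [Pi.sub_apply]
      ring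
    have hηint : (∫ v in s..t, w v) = 0 := by
      have hηcont : ContinuousOn η (Set.Icc s t) := by
        apply ContinuousOn.div _ hAcont hA
        apply (hγ.continuousOn).sub
        have h1 : ContDiff ℝ 1 (fun v : ℝ => a1 * (t - v)) := by fun_prop
        have h2 : ContDiff ℝ 1 (fun v : ℝ => a1 * (v - s)) := by fun_prop
        have : ContDiff ℝ 1 (gammaPath a0 a1 x s d t) := by
          unfold gammaPath
          exact (((contDiff_const.mul h1.sinh).div_const _).add
            ((contDiff_const.mul h2.sinh).div_const _)).sub contDiff_const
        exact this.continuous.continuousOn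
      have hwint : IntervalIntegrable w MeasureTheory.volume s t := by
        apply ContinuousOn.intervalIntegrable
        rw [huIcc]; exact hwcont
      have := intervalIntegral.integral_eq_sub_of_hasDeriv_right_of_le hstle hηcont
        (fun v hv => ((hηderiv v (Set.Ioo_subset_Icc_self hv)).hasDerivAt
          (Icc_mem_nhds hv.1 hv.2)).hasDerivWithinAt) hwint
      rw [this, hη]
      have hγss : gammaPath a0 a1 x s d t s = x := by
        simp [gammaPath]; field_simp; ring
      have hγtt : gammaPath a0 a1 x s d t t = d := by
        simp [gammaPath]; field_simp; ring
      simp [hγss, hγtt, hγx, hγd]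
    -- decomposition of the integrand
    have hdecomp : ∀ v ∈ Set.uIcc s t, E v ^ 2
        = (k / Real.sinh (a1 * (T - v))) ^ 2 + (2 * k) * w v
          + (Real.sinh (a1 * (T - v)) * w v) ^ 2 := by
      intro v hv
      rw [huIcc] at hv
      have hAv := hA v hv
      rw [hw]
      field_simp
      ring
    have hint1 : IntervalIntegrable (fun v => (k / Real.sinh (a1 * (T - v))) ^ 2)
        MeasureTheory.volume s t := by
      apply ContinuousOn.intervalIntegrable
      rw [huIcc]; exact (continuousOn_const.div hAcont hA).pow 2
    have hint2 : IntervalIntegrable (fun v => (2 * k) * w v) MeasureTheory.volume s t := by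
      apply ContinuousOn.intervalIntegrable
      rw [huIcc]; exact continuousOn_const.mul hwcont
    have hint3 : IntervalIntegrable (fun v => (Real.sinh (a1 * (T - v)) * w v) ^ 2)
        MeasureTheory.volume s t := by
      apply ContinuousOn.intervalIntegrable
      rw [huIcc]; exact ((hAcont.mul hwcont).pow 2)
    have hEq : (∫ v in s..t, E v ^ 2)
        = (∫ v in s..t, (k / Real.sinh (a1 * (T - v))) ^ 2)
          + ((∫ v in s..t, (2 * k) * w v)
            + ∫ v in s..t, (Real.sinh (a1 * (T - v)) * w v) ^ 2) := by
      rw [← intervalIntegral.integral_add hint2 hint3,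
        ← intervalIntegral.integral_add hint1 (hint2.add hint3)]
      exact intervalIntegral.integral_congr (fun v hv => by rw [hdecomp v hv]; ring)
    have hcross : (∫ v in s..t, (2 * k) * w v) = 0 := by
      rw [intervalIntegral.integral_const_mul, hηint, mul_zero]
    have hnonneg : 0 ≤ ∫ v in s..t, (Real.sinh (a1 * (T - v)) * w v) ^ 2 :=
      intervalIntegral.integral_nonneg hstle (fun u _ => sq_nonneg _)
    have : 2 * cost a0 a1 T xT x s d t ≤ ∫ v in s..t, E v ^ 2 := by
      rw [hEq, hcross, ← hIcost]
      linarith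
    simp only [hE] at this ⊢
    linarith
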